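/- Let p, q, r be pairwise distinct nonlogical atoms. Then CL1 proves ((p→q)⊓(p→r)) → (p→(q⊓r)), but CL1 does not prove ((p→q)⊓(p→r)) → (p→(q∧r)). -/

import Mathlib

/-!
A formula without surface choices is provable exactly when it is a tautology. In
`((p→q)⊓(p→r)) → (p→(q⊓r))`, Rule (a) splits `q⊓r`, and Rule (b) answers each half with the
matching conjunct of the antecedent, leaving a tautology. In `((p→q)⊓(p→r)) → (p→(q∧r))` there
is nothing to split and the formula is not stable, so a proof has to start with Rule (b), which
leaves `(p→q) → (p→(q∧r))` or `(p→r) → (p→(q∧r))`; neither is a tautology.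
-/

namespace CoL

/-- CL1-formulas: built from the logical atoms ⊤, ⊥ and nonlogical atoms by
¬, ∧, ∨, ⊓ (`cand`), ⊔ (`cor`).  `F → G` abbreviates `(¬F) ∨ G`. -/
inductive PF : Type
  | top : PF
  | bot : PF
  | atom (n : ℕ) : PF
  | neg (f : PF) : PF
  | and (f g : PF) : PF
  | or (f g : PF) : PF
  | cand (f g : PF) : PF
  | cor (f g : PF) : PF
deriving DecidableEq

/-- `F → G` abbreviates `(¬F) ∨ G`. -/
def PF.imp (f g : PF) : PF := .or (.neg f) g

/-- Classical evaluation of a formula under an assignment of truth values to the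
nonlogical atoms (the clauses for ⊓, ⊔ are irrelevant junk: they are only ever
used on elementary formulas). -/
def PF.eval (v : ℕ → Bool) : PF → Bool
  | .top => true
  | .bot => false
  | .atom n => v n
  | .neg f => !f.eval v
  | .and f g => f.eval v && g.eval v
  | .or f g => f.eval v || g.eval v
  | .cand _ _ => false
  | .cor _ _ => false

/-- Classical tautology: true under every assignment. -/
def PF.Taut (f : PF) : Prop := ∀ v : ℕ → Bool, f.eval v = true

/-- The elementarization of a CL1-formula: every surface occurrence of `G⊓H` is
replaced by ⊤ and every surface occurrence of `G⊔H` by ⊥. -/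
def PF.elem : PF → PF
  | .top => .top
  | .bot => .bot
  | .atom n => .atom n
  | .neg f => .neg f.elem
  | .and f g => .and f.elem g.elem
  | .or f g => .or f.elem g.elem
  | .cand _ _ => .top
  | .cor _ _ => .bot

/-- A CL1-formula is stable iff its elementarization is a classical tautology. -/
def PF.Stable (f : PF) : Prop := f.elem.Taut

/-- `RuleAPrem pol F H`: `H` is the result of replacing in `F` one surface
occurrence of a subformula `G₁⊓G₂` occurring positively (resp. of `G₁⊔G₂`
occurring negatively) by `G_i`; `pol` is the polarity of the context (`true` =
positive). -/
inductive RuleAPrem : Bool → PF → PF → Prop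
  | cand1 (g₁ g₂) : RuleAPrem true (.cand g₁ g₂) g₁
  | cand2 (g₁ g₂) : RuleAPrem true (.cand g₁ g₂) g₂
  | cor1 (g₁ g₂) : RuleAPrem false (.cor g₁ g₂) g₁
  | cor2 (g₁ g₂) : RuleAPrem false (.cor g₁ g₂) g₂
  | negc {pol f h} : RuleAPrem (!pol) f h → RuleAPrem pol (.neg f) (.neg h)
  | andl {pol f h} (g) : RuleAPrem pol f h → RuleAPrem pol (.and f g) (.and h g)
  | andr {pol f h} (g) : RuleAPrem pol f h → RuleAPrem pol (.and g f) (.and g h)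
  | orl {pol f h} (g) : RuleAPrem pol f h → RuleAPrem pol (.or f g) (.or h g)
  | orr {pol f h} (g) : RuleAPrem pol f h → RuleAPrem pol (.or g f) (.or g h)

/-- `RuleBPrem pol F H`: `H` is the result of replacing in `F` one surface
occurrence of a subformula `G₁⊓G₂` occurring negatively (resp. of `G₁⊔G₂`
occurring positively) by `G_i`. -/
inductive RuleBPrem : Bool → PF → PF → Prop
  | cand1 (g₁ g₂) : RuleBPrem false (.cand g₁ g₂) g₁
  | cand2 (g₁ g₂) : RuleBPrem false (.cand g₁ g₂) g₂
  | cor1 (g₁ g₂) : RuleBPrem true (.cor g₁ g₂) g₁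
  | cor2 (g₁ g₂) : RuleBPrem true (.cor g₁ g₂) g₂
  | negc {pol f h} : RuleBPrem (!pol) f h → RuleBPrem pol (.neg f) (.neg h)
  | andl {pol f h} (g) : RuleBPrem pol f h → RuleBPrem pol (.and f g) (.and h g)
  | andr {pol f h} (g) : RuleBPrem pol f h → RuleBPrem pol (.and g f) (.and g h)
  | orl {pol f h} (g) : RuleBPrem pol f h → RuleBPrem pol (.or f g) (.or h g)
  | orr {pol f h} (g) : RuleBPrem pol f h → RuleBPrem pol (.or g f) (.or g h)

/-- Provability in CL1: Rule (a) derives a stable `F` from the set of all results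
of replacing a positive surface `G₁⊓G₂` (negative surface `G₁⊔G₂`) by `G_i`;
Rule (b) derives `F` from the result of replacing one negative surface `G₁⊓G₂`
(positive surface `G₁⊔G₂`) by `G_i`. -/
inductive CL1Prov : PF → Prop
  | ruleA {f} : f.Stable → (∀ h, RuleAPrem true f h → CL1Prov h) → CL1Prov f
  | ruleB {f h} : RuleBPrem true f h → CL1Prov h → CL1Prov f

namespace PF

def hasSurfaceChoice : PF → Bool
  | .top | .bot | .atom _ => false
  | .neg f => f.hasSurfaceChoice
  | .and f g | .or f g => f.hasSurfaceChoice || g.hasSurfaceChoice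
  | .cand _ _ | .cor _ _ => true

theorem elem_eq_self {f : PF} (hf : f.hasSurfaceChoice = false) : f.elem = f := by
  induction f <;> simp_all [hasSurfaceChoice, elem]

theorem stable_iff_taut {f : PF} (hf : f.hasSurfaceChoice = false) : f.Stable ↔ f.Taut := by
  rw [Stable, elem_eq_self hf]

theorem taut_imp_self (f : PF) : (f.imp f).Taut := fun v => by
  simp [imp, eval]

end PF

theorem RuleAPrem.hasSurfaceChoice {pol : Bool} {f h : PF} (H : RuleAPrem pol f h) :
    f.hasSurfaceChoice = true := by
  induction H <;> simp_all [PF.hasSurfaceChoice]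

theorem RuleBPrem.hasSurfaceChoice {pol : Bool} {f h : PF} (H : RuleBPrem pol f h) :
    f.hasSurfaceChoice = true := by
  induction H <;> simp_all [PF.hasSurfaceChoice]

theorem cl1Prov_iff_taut {f : PF} (hf : f.hasSurfaceChoice = false) :
    CL1Prov f ↔ f.Taut := by
  rw [← PF.stable_iff_taut hf]
  constructor
  · rintro (⟨hst, -⟩ | ⟨hb, -⟩)
    · exact hst
    · exact absurd hb.hasSurfaceChoice (by simp [hf])
  · exact fun hst => .ruleA hst fun _ ha => absurd ha.hasSurfaceChoice (by simp [hf])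

theorem cl1Prov_cand_imp_imp_cand {a b e c d : PF} (ha : a.hasSurfaceChoice = false)
    (hb : b.hasSurfaceChoice = false) (he : e.hasSurfaceChoice = false)
    (hc : c.hasSurfaceChoice = false) (hd : d.hasSurfaceChoice = false)
    (hac : (a.imp (e.imp c)).Taut) (hbd : (b.imp (e.imp d)).Taut) :
    CL1Prov ((PF.cand a b).imp (e.imp (PF.cand c d))) := by
  refine .ruleA (fun v => by simp [PF.imp, PF.elem, PF.eval]) fun h hh => ?_
  rcases hh with _ | _ | _ | _ | _ | ⟨_, hh⟩ | ⟨_, hh⟩ | ⟨_, hh⟩ | ⟨_, hh⟩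
  · rcases hh with _ | _ | _ | _ | ⟨hh⟩
    rcases hh
  · rcases hh with _ | _ | _ | _ | _ | ⟨_, hh⟩ | ⟨_, hh⟩ | ⟨_, hh⟩ | ⟨_, hh⟩
    · rcases hh with _ | _ | _ | _ | ⟨hh⟩
      exact absurd hh.hasSurfaceChoice (by simp [he])
    · rcases hh with _ | _
      · refine .ruleB (.orl _ (.negc (.cand1 a b))) ?_
        exact (cl1Prov_iff_taut (by simp [PF.hasSurfaceChoice, *])).2 hac
      · refine .ruleB (.orl _ (.negc (.cand2 a b))) ?_
        exact (cl1Prov_iff_taut (by simp [PF.hasSurfaceChoice, *])).2 hbd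

theorem taut_of_cl1Prov_cand_imp {a b g : PF} (ha : a.hasSurfaceChoice = false)
    (hb : b.hasSurfaceChoice = false) (hg : g.hasSurfaceChoice = false)
    (hprov : CL1Prov ((PF.cand a b).imp g)) :
    (a.imp g).Taut ∨ (b.imp g).Taut := by
  rcases hprov with ⟨hst, -⟩ | ⟨hrule, hprov⟩
  · have hg_taut : g.Taut := fun v => by
      simpa [PF.imp, PF.elem, PF.eval, PF.elem_eq_self hg] using hst v
    exact .inl fun v => by simp [PF.imp, PF.eval, hg_taut v]
  · rcases hrule with _ | _ | _ | _ | _ | ⟨_, hrule⟩ | ⟨_, hrule⟩ | ⟨_, hrule⟩ | ⟨_, hrule⟩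
    · rcases hrule with _ | _ | _ | _ | ⟨hrule⟩
      rcases hrule with _ | _
      · exact .inl <| (cl1Prov_iff_taut (by simp [PF.imp, PF.hasSurfaceChoice, *])).1 hprov
      · exact .inr <| (cl1Prov_iff_taut (by simp [PF.imp, PF.hasSurfaceChoice, *])).1 hprov
    · exact absurd hrule.hasSurfaceChoice (by simp [hg])

/-- For pairwise distinct nonlogical atoms `p,q,r`: CL1 proves
`((p→q)⊓(p→r)) → (p→(q⊓r))` but does not prove `((p→q)⊓(p→r)) → (p→(q∧r))`. -/
theorem cl1_example (p q r : ℕ) (hpq : p ≠ q) (hpr : p ≠ r) (hqr : q ≠ r) :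
    CL1Prov (PF.imp
      (PF.cand (PF.imp (.atom p) (.atom q)) (PF.imp (.atom p) (.atom r)))
      (PF.imp (.atom p) (PF.cand (.atom q) (.atom r)))) ∧
    ¬ CL1Prov (PF.imp
      (PF.cand (PF.imp (.atom p) (.atom q)) (PF.imp (.atom p) (.atom r)))
      (PF.imp (.atom p) (PF.and (.atom q) (.atom r)))) := by
  refine ⟨cl1Prov_cand_imp_imp_cand rfl rfl rfl rfl rfl
    (PF.taut_imp_self _) (PF.taut_imp_self _), fun hprov => ?_⟩
  rcases taut_of_cl1Prov_cand_imp rfl rfl rfl hprov with h | h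
  · simpa [PF.imp, PF.eval, hpr.symm, hqr.symm] using h (fun n => n = p || n = q)
  · simpa [PF.imp, PF.eval, hpq.symm, hqr] using h (fun n => n = p || n = r)

end CoL
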